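/- Fix ξ₀ ∈ ℤ² and v ∈ ℤ². Define û : ℤ² × ℝ → ℂ² by û(0,t) = i·ξ₀, û(ξ,t) = e^{2π(ξ·ξ₀)t} f(ξ) v for ξ in S∖{0} where S = {ξ ∈ ℤ² : ξ·v = 0} and f : S∖{0} → ℂ, and û(ξ,t) = 0 for ξ ∉ S. Then for every ξ ∈ ℤ² and t ∈ ℝ, ∂_t û(ξ,t) = -2πi ∑_{ζ+η=ξ} (û(ζ,t)·η) û(η,t), where the sum runs over pairs (ζ,η) ∈ ℤ²×ℤ² with ζ+η=ξ (only finitely many terms are nonzero). -/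

import Mathlib

/-- The bilinear dot product on `ℂ²`. -/
noncomputable def dotC2 (a b : Fin 2 → ℂ) : ℂ := ∑ i, a i * b i

/-- Coercion of a lattice vector in `ℤ²` to `ℂ²`. -/
def latC2 (x : Fin 2 → ℤ) : Fin 2 → ℂ := fun i => (x i : ℂ)

/-!
Every nonzero mode is a multiple of `v` supported on `S = v^⊥`. So in the convolution sum, for
`ζ ≠ 0` the coefficient `û(ζ)·η` is a multiple of `v·η`, which vanishes whenever `û(η) ≠ 0`.
Only `ζ = 0` survives, and `-2πi · i(ξ₀·ξ) û(ξ) = 2π(ξ·ξ₀) û(ξ)`: this is the growth rate of the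
exponential on `S∖{0}`, and it is zero for the constant mode `û(0)` and the vanishing modes off `S`.
-/

open Complex

lemma dotC2_comm (a b : Fin 2 → ℂ) : dotC2 a b = dotC2 b a := by
  simp only [dotC2, mul_comm]

lemma dotC2_smul_left (c : ℂ) (a b : Fin 2 → ℂ) : dotC2 (c • a) b = c * dotC2 a b := by
  simp only [dotC2, Pi.smul_apply, smul_eq_mul, Finset.mul_sum, mul_assoc]

lemma dotC2_latC2 (x y : Fin 2 → ℤ) : dotC2 (latC2 x) (latC2 y) = ((∑ i, x i * y i : ℤ) : ℂ) := by
  simp [dotC2, latC2]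

lemma tsum_dotC2_latC2_sub_smul_eq_of_parallel (u : (Fin 2 → ℤ) → Fin 2 → ℂ) (v : Fin 2 → ℤ)
    (hpar : ∀ ζ ≠ 0, ∃ c : ℂ, u ζ = c • latC2 v)
    (hout : ∀ η, ∑ i, η i * v i ≠ 0 → u η = 0) (ξ : Fin 2 → ℤ) :
    ∑' ζ, dotC2 (u ζ) (latC2 (ξ - ζ)) • u (ξ - ζ) = dotC2 (u 0) (latC2 ξ) • u ξ := by
  rw [tsum_eq_single 0 fun ζ hζ => ?_, sub_zero]
  by_cases hη : ∑ i, (ξ - ζ) i * v i = 0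
  · obtain ⟨c, hc⟩ := hpar ζ hζ
    rw [hc, dotC2_smul_left, dotC2_comm, dotC2_latC2, hη, Int.cast_zero, mul_zero, zero_smul]
  · rw [hout _ hη, smul_zero]

lemma hasDerivAt_ofReal_exp_mul_smul {E : Type*} [NormedAddCommGroup E] [NormedSpace ℂ E]
    (a t : ℝ) (w : E) :
    HasDerivAt (fun s : ℝ => (Real.exp (a * s) : ℂ) • w)
      ((a : ℂ) • (Real.exp (a * t) : ℂ) • w) t := by
  have hexp : HasDerivAt (fun s : ℝ => (Real.exp (a * s) : ℂ)) (Real.exp (a * t) * a : ℝ) t :=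
    (((hasDerivAt_id t).const_mul a).exp.congr_deriv (by simp)).ofReal_comp
  simpa [smul_smul, mul_comm] using hexp.smul_const w

theorem stmt4_general (ξ₀ v : Fin 2 → ℤ) (f : (Fin 2 → ℤ) → ℂ)
    (u : (Fin 2 → ℤ) → ℝ → (Fin 2 → ℂ))
    (h0 : ∀ t : ℝ, u 0 t = fun i => Complex.I * (ξ₀ i : ℂ))
    (hS : ∀ ξ : Fin 2 → ℤ, ξ ≠ 0 → (∑ i, ξ i * v i) = 0 → ∀ t : ℝ,
      u ξ t = fun i =>
        (Real.exp (2 * Real.pi * ((∑ j, ξ j * ξ₀ j : ℤ) : ℝ) * t) : ℂ) * f ξ * (v i : ℂ))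
    (hout : ∀ ξ : Fin 2 → ℤ, (∑ i, ξ i * v i) ≠ 0 → ∀ t : ℝ, u ξ t = 0) :
    ∀ (ξ : Fin 2 → ℤ) (t : ℝ),
      HasDerivAt (fun s => u ξ s)
        ((-(2 * (Real.pi : ℂ) * Complex.I)) •
          ∑' ζ : Fin 2 → ℤ, dotC2 (u ζ t) (latC2 (ξ - ζ)) • u (ξ - ζ) t) t := by
  intro ξ t
  have hmode : ∀ ξ ≠ 0, ∑ i, ξ i * v i = 0 → ∀ s, u ξ s =
      (Real.exp (2 * Real.pi * ((∑ j, ξ j * ξ₀ j : ℤ) : ℝ) * s) : ℂ) • f ξ • latC2 v := by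
    intro ξ hξ hξS s
    ext i
    simp [hS ξ hξ hξS s, latC2, mul_assoc]
  have hpar : ∀ ζ ≠ 0, ∃ c : ℂ, u ζ t = c • latC2 v := by
    intro ζ hζ
    by_cases hζS : ∑ i, ζ i * v i = 0
    · exact ⟨_, (hmode ζ hζ hζS t).trans (smul_smul _ _ _)⟩
    · exact ⟨0, by rw [hout ζ hζS, zero_smul]⟩
  have hrate : -(2 * (Real.pi : ℂ) * I) * dotC2 (u 0 t) (latC2 ξ) =
      ((2 * Real.pi * ((∑ j, ξ j * ξ₀ j : ℤ) : ℝ) : ℝ) : ℂ) := by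
    rw [show u 0 t = I • latC2 ξ₀ from h0 t, dotC2_smul_left, dotC2_comm, dotC2_latC2]
    push_cast
    linear_combination (-(2 * (Real.pi : ℂ)) * ∑ j, (ξ j : ℂ) * ξ₀ j) * I_sq
  rw [tsum_dotC2_latC2_sub_smul_eq_of_parallel (u · t) v hpar (fun η hη => hout η hη t),
    smul_smul, hrate]
  rcases eq_or_ne ξ 0 with rfl | hξ
  · simpa [funext h0] using hasDerivAt_const t (fun i => I * (ξ₀ i : ℂ))
  by_cases hξS : ∑ i, ξ i * v i = 0
  · rw [funext (hmode ξ hξ hξS)]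
    exact hasDerivAt_ofReal_exp_mul_smul _ t _
  · simpa [funext (hout ξ hξS)] using hasDerivAt_const t (0 : Fin 2 → ℂ)

/-- The 2D complex construction: with `û(0,t) = i ξ₀`, `û(ξ,t) = e^{2π(ξ·ξ₀)t} f(ξ) v`
for `ξ ∈ S∖{0}` (where `S = {ξ : ξ·v = 0}`) and `û(ξ,t) = 0` for `ξ ∉ S`, the Fourier
modes satisfy `∂ₜ û(ξ,t) = -2πi ∑_{ζ+η=ξ} (û(ζ,t)·η) û(η,t)`. -/
theorem stmt4 (ξ₀ v : Fin 2 → ℤ) (f : (Fin 2 → ℤ) → ℂ)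
    (hξ₀S : ∑ i, ξ₀ i * v i = 0)
    (u : (Fin 2 → ℤ) → ℝ → (Fin 2 → ℂ))
    (h0 : ∀ t : ℝ, u 0 t = fun i => Complex.I * (ξ₀ i : ℂ))
    (hS : ∀ ξ : Fin 2 → ℤ, ξ ≠ 0 → (∑ i, ξ i * v i) = 0 → ∀ t : ℝ,
      u ξ t = fun i =>
        (Real.exp (2 * Real.pi * ((∑ j, ξ j * ξ₀ j : ℤ) : ℝ) * t) : ℂ) * f ξ * (v i : ℂ))
    (hout : ∀ ξ : Fin 2 → ℤ, (∑ i, ξ i * v i) ≠ 0 → ∀ t : ℝ, u ξ t = 0) :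
    ∀ (ξ : Fin 2 → ℤ) (t : ℝ),
      HasDerivAt (fun s => u ξ s)
        ((-(2 * (Real.pi : ℂ) * Complex.I)) •
          ∑' ζ : Fin 2 → ℤ, dotC2 (u ζ t) (latC2 (ξ - ζ)) • u (ξ - ζ) t) t :=
  stmt4_general ξ₀ v f u h0 hS hout
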